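/- No tree admits an error-correcting identifying code. -/

import Mathlib

open SimpleGraph

variable {V : Type*}

/-- Closed neighborhood of `v` in `G`. -/
def closedNbhd (G : SimpleGraph V) (v : V) : Set V := insert v (G.neighborSet v)

/-- `S` is an error-correcting identifying code for `G`: every vertex is 3-dominated
and every pair of distinct vertices is 3-distinguished. -/
def IsErrIC (G : SimpleGraph V) (S : Set V) : Prop :=
  (∀ v : V, 3 ≤ (closedNbhd G v ∩ S).ncard) ∧
  ∀ u v : V, u ≠ v → 3 ≤ (symmDiff (closedNbhd G u ∩ S) (closedNbhd G v ∩ S)).ncard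

/-- `G` has no closed twins and no open twins. -/
def TwinFree (G : SimpleGraph V) : Prop :=
  ∀ u v : V, u ≠ v →
    closedNbhd G u ≠ closedNbhd G v ∧ G.neighborSet u ≠ G.neighborSet v

/-!
Already the domination condition is impossible: it forces every closed neighbourhood to have
at least three vertices, i.e. every vertex to have degree at least two, whereas every finite
tree has a vertex of degree at most one (a leaf, or the single vertex of the trivial tree).
-/

lemma SimpleGraph.IsTree.exists_degree_le_one [Fintype V] [Nonempty V] {G : SimpleGraph V}
    [DecidableRel G.Adj] (hG : G.IsTree) : ∃ v, G.degree v ≤ 1 := by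
  rcases subsingleton_or_nontrivial V with hV | hV
  · obtain ⟨v⟩ := ‹Nonempty V›
    have := G.degree_lt_card_verts v
    have := Fintype.card_le_one_iff_subsingleton.mpr hV
    exact ⟨v, by omega⟩
  · obtain ⟨v, hv⟩ := hG.exists_vert_degree_one_of_nontrivial
    exact ⟨v, hv.le⟩

lemma ncard_closedNbhd (G : SimpleGraph V) (v : V) [Fintype (G.neighborSet v)] :
    (closedNbhd G v).ncard = G.degree v + 1 := by
  rw [closedNbhd, Set.ncard_insert_of_notMem G.notMem_neighborSet_self,
    Set.ncard_eq_toFinset_card', ← neighborFinset_def, card_neighborFinset_eq_degree]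

lemma IsErrIC.two_le_degree {G : SimpleGraph V} {S : Set V} (hS : IsErrIC G S) (v : V)
    [Fintype (G.neighborSet v)] : 2 ≤ G.degree v := by
  have hdom := hS.1 v
  have hsub := Set.ncard_inter_le_ncard_left (closedNbhd G v) S
    ((G.neighborSet v).toFinite.insert v)
  rw [ncard_closedNbhd] at hsub
  omega

theorem stmt7 [Fintype V] [Nonempty V] (G : SimpleGraph V) (hG : G.IsTree) :
    ¬∃ S : Set V, IsErrIC G S := by
  classical
  rintro ⟨S, hS⟩
  obtain ⟨v, hv⟩ := hG.exists_degree_le_one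
  have := hS.two_le_degree v
  omega
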